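/- Functional completeness (Theorem 5): Let F be an n-ary connective added to SC∞ via the generalized rule schemata (I)–(IV) with defining R-expressions S_{i k} (i = 1,…,t; k = 1,…,s_i) whose formula components are among A₁,…,Aₙ. Then in the extended calculus, F(A₁,…,Aₙ) is strictly equivalent to a formula built from A₁,…,Aₙ using only ∼, ∧, ∨, →: ⊢ F(A₁,…,Aₙ) ⇔ˢ (S̄₁₁ ∧ … ∧ S̄₁s₁) ∨ … ∨ (S̄_t1 ∧ … ∧ S̄_tsₜ), where S̄ is the formula translation of S. -/

import Mathlib

/-- Formulas built from propositional variables by `∼`, `∧`, `∨`, `→`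
together with one additional `n`-ary connective `F` (the constructor `app`). -/
inductive FormulaF (n : ℕ) : Type
  | var : ℕ → FormulaF n
  | snot : FormulaF n → FormulaF n
  | and : FormulaF n → FormulaF n → FormulaF n
  | or : FormulaF n → FormulaF n → FormulaF n
  | imp : FormulaF n → FormulaF n → FormulaF n
  | app : (Fin n → FormulaF n) → FormulaF n

/-- R-expressions over the extended language. -/
inductive RExprF (n : ℕ) : Type
  | fm : FormulaF n → RExprF n
  | negFm : FormulaF n → RExprF n
  | seq : List (RExprF n) → RExprF n → RExprF n
  | negSeq : List (RExprF n) → RExprF n → RExprF n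

/-- The refutation `−S` of an R-expression, with `−−S = S`. -/
def rnegF {n : ℕ} : RExprF n → RExprF n
  | .fm A => .negFm A
  | .negFm A => .fm A
  | .seq Δ S => .negSeq Δ S
  | .negSeq Δ S => .seq Δ S

/-- Schematic R-expressions whose formula components are among the
placeholders `A₁, …, Aₙ` (represented by `Fin n`). -/
inductive SRExpr (n : ℕ) : Type
  | fm : Fin n → SRExpr n
  | negFm : Fin n → SRExpr n
  | seq : List (SRExpr n) → SRExpr n → SRExpr n
  | negSeq : List (SRExpr n) → SRExpr n → SRExpr n

mutual
/-- Instantiation of a schematic R-expression at arguments `A₁, …, Aₙ`. -/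
def inst {n : ℕ} (σ : Fin n → FormulaF n) : SRExpr n → RExprF n
  | .fm i => .fm (σ i)
  | .negFm i => .negFm (σ i)
  | .seq Δ S => .seq (instList σ Δ) (inst σ S)
  | .negSeq Δ S => .negSeq (instList σ Δ) (inst σ S)

def instList {n : ℕ} (σ : Fin n → FormulaF n) : List (SRExpr n) → List (RExprF n)
  | [] => []
  | S :: Δ => inst σ S :: instList σ Δ
end

/-- Defining data for the `n`-ary connective `F`: a doubly indexed family of
schematic R-expressions `S_{i k}` (`i = 1,…,t`; `k = 1,…,s_i`). -/
structure ConnDef (n : ℕ) : Type where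
  t : ℕ
  s : Fin t → ℕ
  S : (i : Fin t) → Fin (s i) → SRExpr n

/-- Derivability in `SC∞` extended with the connective `F` governed by the
generalized rule schemata (I)–(IV) determined by `D`, from the premise set `P`. -/
inductive SCF {n : ℕ} (D : ConnDef n) (P : Set (RExprF n)) : RExprF n → Prop
  | prem {S} : S ∈ P → SCF D P S
  | rf (S) : SCF D P (.seq [S] S)
  | wl {Δ S} (T) : SCF D P (.seq Δ S) → SCF D P (.seq (Δ ++ [T]) S)
  | pl {U} (Δ S T Γ) : SCF D P (.seq (Δ ++ S :: T :: Γ) U) →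
      SCF D P (.seq (Δ ++ T :: S :: Γ) U)
  | cl {Δ S T} : SCF D P (.seq (Δ ++ [S, S]) T) → SCF D P (.seq (Δ ++ [S]) T)
  | cut {Δ S T} : SCF D P (.seq Δ S) → SCF D P (.seq (Δ ++ [S]) T) → SCF D P (.seq Δ T)
  | riP {Γ Δ S} : SCF D P (.seq (Γ ++ Δ) S) → SCF D P (.seq Γ (.seq Δ S))
  | liP {Γ Δ S T} : (∀ U ∈ Δ, SCF D P (.seq Γ U)) → SCF D P (.seq (Γ ++ [S]) T) →
      SCF D P (.seq (Γ ++ [.seq Δ S]) T)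
  | riN {Δ Γ S} : SCF D P (.seq (Δ ++ Γ) (rnegF S)) → SCF D P (.seq Δ (rnegF (.seq Γ S)))
  | riN' {Δ Γ S} : SCF D P (.seq Δ (rnegF (.seq Γ S))) → SCF D P (.seq (Δ ++ Γ) (rnegF S))
  | liN {Δ Γ S T} : (∀ U ∈ Γ, SCF D P (.seq Δ U)) → SCF D P (.seq (Δ ++ [rnegF S]) T) →
      SCF D P (.seq (Δ ++ [rnegF (.seq Γ S)]) T)
  | snotL {Δ A S} : SCF D P (.seq (Δ ++ [.negFm A]) S) → SCF D P (.seq (Δ ++ [.fm (.snot A)]) S)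
  | snotR {Δ A} : SCF D P (.seq Δ (.negFm A)) → SCF D P (.seq Δ (.fm (.snot A)))
  | snotLm {Δ A S} : SCF D P (.seq (Δ ++ [.fm A]) S) → SCF D P (.seq (Δ ++ [.negFm (.snot A)]) S)
  | snotRm {Δ A} : SCF D P (.seq Δ (.fm A)) → SCF D P (.seq Δ (.negFm (.snot A)))
  | andL {Δ A B S} : SCF D P (.seq (Δ ++ [.fm A, .fm B]) S) →
      SCF D P (.seq (Δ ++ [.fm (.and A B)]) S)
  | andR {Δ A B} : SCF D P (.seq Δ (.fm A)) → SCF D P (.seq Δ (.fm B)) →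
      SCF D P (.seq Δ (.fm (.and A B)))
  | andLm {Δ A B S} : SCF D P (.seq (Δ ++ [.negFm A]) S) → SCF D P (.seq (Δ ++ [.negFm B]) S) →
      SCF D P (.seq (Δ ++ [.negFm (.and A B)]) S)
  | andRm₁ {Δ A B} : SCF D P (.seq Δ (.negFm A)) → SCF D P (.seq Δ (.negFm (.and A B)))
  | andRm₂ {Δ A B} : SCF D P (.seq Δ (.negFm B)) → SCF D P (.seq Δ (.negFm (.and A B)))
  | orL {Δ A B S} : SCF D P (.seq (Δ ++ [.fm A]) S) → SCF D P (.seq (Δ ++ [.fm B]) S) →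
      SCF D P (.seq (Δ ++ [.fm (.or A B)]) S)
  | orR₁ {Δ A B} : SCF D P (.seq Δ (.fm A)) → SCF D P (.seq Δ (.fm (.or A B)))
  | orR₂ {Δ A B} : SCF D P (.seq Δ (.fm B)) → SCF D P (.seq Δ (.fm (.or A B)))
  | orLm {Δ A B S} : SCF D P (.seq (Δ ++ [.negFm A, .negFm B]) S) →
      SCF D P (.seq (Δ ++ [.negFm (.or A B)]) S)
  | orRm {Δ A B} : SCF D P (.seq Δ (.negFm A)) → SCF D P (.seq Δ (.negFm B)) →
      SCF D P (.seq Δ (.negFm (.or A B)))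
  | impL {Δ A B S} : SCF D P (.seq (Δ ++ [.seq [.fm A] (.fm B)]) S) →
      SCF D P (.seq (Δ ++ [.fm (.imp A B)]) S)
  | impR {Δ A B} : SCF D P (.seq Δ (.seq [.fm A] (.fm B))) → SCF D P (.seq Δ (.fm (.imp A B)))
  | impLm {Δ A B S} : SCF D P (.seq (Δ ++ [.negSeq [.fm A] (.fm B)]) S) →
      SCF D P (.seq (Δ ++ [.negFm (.imp A B)]) S)
  | impRm {Δ A B} : SCF D P (.seq Δ (.negSeq [.fm A] (.fm B))) →
      SCF D P (.seq Δ (.negFm (.imp A B)))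
  -- schema (I)
  | schemaI {Δ} {σ : Fin n → FormulaF n} (i : Fin D.t) :
      (∀ k : Fin (D.s i), SCF D P (.seq Δ (inst σ (D.S i k)))) →
      SCF D P (.seq Δ (.fm (.app σ)))
  -- schema (II)
  | schemaII {Δ T} {σ : Fin n → FormulaF n} :
      (∀ i : Fin D.t, SCF D P (.seq (Δ ++ List.ofFn (fun k => inst σ (D.S i k))) T)) →
      SCF D P (.seq (Δ ++ [.fm (.app σ)]) T)
  -- schema (III)
  | schemaIII {Δ} {σ : Fin n → FormulaF n} (c : (i : Fin D.t) → Fin (D.s i)) :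
      (∀ i : Fin D.t, SCF D P (.seq Δ (rnegF (inst σ (D.S i (c i)))))) →
      SCF D P (.seq Δ (.negFm (.app σ)))
  -- schema (IV)
  | schemaIV {Δ T} {σ : Fin n → FormulaF n} :
      (∀ c : (i : Fin D.t) → Fin (D.s i),
        SCF D P (.seq (Δ ++ List.ofFn (fun i => rnegF (inst σ (D.S i (c i))))) T)) →
      SCF D P (.seq (Δ ++ [.negFm (.app σ)]) T)

/-- Conjunction of a nonempty list of formulas (junk value on `[]`). -/
def conjOfList {n : ℕ} : List (FormulaF n) → FormulaF n
  | [] => .var 0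
  | A :: l => l.foldl .and A

/-- Disjunction of a nonempty list of formulas (junk value on `[]`). -/
def disjOfList {n : ℕ} : List (FormulaF n) → FormulaF n
  | [] => .var 0
  | A :: l => l.foldl .or A

mutual
/-- The formula translation `S̄` of an R-expression `S`. -/
def bar {n : ℕ} : RExprF n → FormulaF n
  | .fm A => A
  | .negFm A => .snot A
  | .seq [] S => bar S
  | .seq (U :: Γ) S => .imp ((barList Γ).foldl .and (bar U)) (bar S)
  | .negSeq [] S => .snot (bar S)
  | .negSeq (U :: Γ) S => .snot (.imp ((barList Γ).foldl .and (bar U)) (bar S))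

def barList {n : ℕ} : List (RExprF n) → List (FormulaF n)
  | [] => []
  | S :: Δ => bar S :: barList Δ
end

/-- The defining formula
`(S̄₁₁ ∧ … ∧ S̄₁s₁) ∨ … ∨ (S̄_t1 ∧ … ∧ S̄_tsₜ)` of `F(A₁,…,Aₙ)`. -/
def defFormula {n : ℕ} (D : ConnDef n) (σ : Fin n → FormulaF n) : FormulaF n :=
  disjOfList (List.ofFn fun i : Fin D.t =>
    conjOfList (List.ofFn fun k : Fin (D.s i) => bar (inst σ (D.S i k))))

/-- `S ⇔ˢ T` in the extended calculus, from no premises. -/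
def StrictEquivF {n : ℕ} (D : ConnDef n) (S T : RExprF n) : Prop :=
  SCF D ∅ (.seq [S] T) ∧ SCF D ∅ (.seq [T] S) ∧
  SCF D ∅ (.seq [rnegF S] (rnegF T)) ∧ SCF D ∅ (.seq [rnegF T] (rnegF S))

namespace SCFLemmas

variable {n : ℕ} {D : ConnDef n} {P : Set (RExprF n)}

theorem perm_aux {Γ Γ' : List (RExprF n)} (h : Γ.Perm Γ') :
    ∀ (Δ : List (RExprF n)) {T}, SCF D P (.seq (Δ ++ Γ) T) → SCF D P (.seq (Δ ++ Γ') T) := by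
  induction h with
  | nil => intro Δ T hd; exact hd
  | cons x h ih =>
    intro Δ T hd
    have := ih (Δ ++ [x]) (by simpa using hd)
    simpa using this
  | swap x y l =>
    intro Δ T hd
    exact SCF.pl Δ y x l hd
  | trans h₁ h₂ ih₁ ih₂ =>
    intro Δ T hd
    exact ih₂ Δ (ih₁ Δ hd)

theorem perm {Γ Γ' : List (RExprF n)} {T} (h : Γ.Perm Γ') (hd : SCF D P (.seq Γ T)) :
    SCF D P (.seq Γ' T) := by
  have := perm_aux (D := D) (P := P) h [] (by simpa using hd)
  simpa using this

theorem weakR {Γ : List (RExprF n)} {T} (hd : SCF D P (.seq Γ T)) :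
    ∀ Δ, SCF D P (.seq (Γ ++ Δ) T) := by
  intro Δ
  induction Δ generalizing Γ with
  | nil => simpa using hd
  | cons x Δ ih =>
    have h1 : SCF D P (.seq ((Γ ++ [x]) ++ Δ) T) := ih (SCF.wl x hd)
    simpa using h1

theorem memSeq {Γ : List (RExprF n)} {x} (hx : x ∈ Γ) : SCF D P (.seq Γ x) := by
  obtain ⟨s, t, rfl⟩ := List.append_of_mem hx
  have h1 : SCF D P (.seq ([x] ++ (s ++ t)) x) := weakR (SCF.rf x) _
  refine perm ?_ h1
  simpa using (List.perm_middle (a := x) (l₁ := s) (l₂ := t)).symm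

theorem mono {Γ₀ Γ : List (RExprF n)} {T} (hall : ∀ U ∈ Γ₀, SCF D P (.seq Γ U))
    (hd : SCF D P (.seq Γ₀ T)) : SCF D P (.seq Γ T) := by
  have h1 : SCF D P (.seq ([] : List (RExprF n)) (.seq Γ₀ T)) := SCF.riP (by simpa using hd)
  have h1' : SCF D P (.seq Γ (.seq Γ₀ T)) := by
    have := weakR h1 Γ; simpa using this
  have h2 : SCF D P (.seq (Γ ++ [RExprF.seq Γ₀ T]) T) :=
    SCF.liP hall (memSeq (by simp))
  exact SCF.cut h1' h2

theorem mono1 {X : RExprF n} {Γ T} (h1 : SCF D P (.seq [X] T)) (h2 : SCF D P (.seq Γ X)) :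
    SCF D P (.seq Γ T) :=
  mono (by simpa using h2) h1

end SCFLemmas

namespace SCFLemmas
variable {n : ℕ} {D : ConnDef n} {P : Set (RExprF n)}

theorem and_projL {A B : FormulaF n} : SCF D P (.seq [.fm (.and A B)] (.fm A)) := by
  have := SCF.andL (D := D) (P := P) (Δ := []) (A := A) (B := B) (S := .fm A)
    (memSeq (by simp))
  simpa using this

theorem and_projR {A B : FormulaF n} : SCF D P (.seq [.fm (.and A B)] (.fm B)) := by
  have := SCF.andL (D := D) (P := P) (Δ := []) (A := A) (B := B) (S := .fm B)
    (memSeq (by simp))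
  simpa using this

theorem foldl_and_intro {Γ : List (RExprF n)} (l : List (FormulaF n)) :
    ∀ (C : FormulaF n), SCF D P (.seq Γ (.fm C)) → (∀ x ∈ l, SCF D P (.seq Γ (.fm x))) →
    SCF D P (.seq Γ (.fm (l.foldl .and C))) := by
  induction l with
  | nil => intro C hC _; exact hC
  | cons y l ih =>
    intro C hC hl
    exact ih (C.and y) (SCF.andR hC (hl y (by simp))) (fun x hx => hl x (by simp [hx]))

theorem foldl_and_elim (l : List (FormulaF n)) :
    ∀ (C x : FormulaF n), (x = C ∨ x ∈ l) →
    SCF D P (.seq [.fm (l.foldl .and C)] (.fm x)) := by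
  induction l with
  | nil =>
    rintro C x (rfl | h)
    · exact SCF.rf _
    · simp at h
  | cons y l ih =>
    rintro C x (rfl | hx)
    · exact mono1 and_projL (ih (x.and y) (x.and y) (Or.inl rfl))
    · rcases List.mem_cons.mp hx with rfl | hx
      · exact mono1 and_projR (ih (C.and x) (C.and x) (Or.inl rfl))
      · exact ih (C.and y) x (Or.inr hx)

theorem foldl_or_introL {Γ : List (RExprF n)} (l : List (FormulaF n)) :
    ∀ (C : FormulaF n), SCF D P (.seq Γ (.fm C)) →
    SCF D P (.seq Γ (.fm (l.foldl .or C))) := by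
  induction l with
  | nil => intro C h; exact h
  | cons y l ih => intro C h; exact ih (C.or y) (SCF.orR₁ h)

theorem foldl_or_intro {Γ : List (RExprF n)} (l : List (FormulaF n)) :
    ∀ (C x : FormulaF n), (x = C ∨ x ∈ l) → SCF D P (.seq Γ (.fm x)) →
    SCF D P (.seq Γ (.fm (l.foldl .or C))) := by
  induction l with
  | nil =>
    rintro C x (rfl | h) hx
    · exact hx
    · simp at h
  | cons y l ih =>
    rintro C x (rfl | hx) h
    · exact foldl_or_introL l (x.or y) (SCF.orR₁ h)
    · rcases List.mem_cons.mp hx with rfl | hx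
      · exact foldl_or_introL l (C.or x) (SCF.orR₂ h)
      · exact ih (C.or y) x (Or.inr hx) h

theorem foldl_or_elim {Δ : List (RExprF n)} {T} (l : List (FormulaF n)) :
    ∀ (C : FormulaF n), SCF D P (.seq (Δ ++ [.fm C]) T) →
    (∀ x ∈ l, SCF D P (.seq (Δ ++ [.fm x]) T)) →
    SCF D P (.seq (Δ ++ [.fm (l.foldl .or C)]) T) := by
  induction l with
  | nil => intro C hC _; exact hC
  | cons y l ih =>
    intro C hC hl
    exact ih (C.or y) (SCF.orL hC (hl y (by simp))) (fun x hx => hl x (by simp [hx]))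

theorem foldl_and_negIntroL {Γ : List (RExprF n)} (l : List (FormulaF n)) :
    ∀ (C : FormulaF n), SCF D P (.seq Γ (.negFm C)) →
    SCF D P (.seq Γ (.negFm (l.foldl .and C))) := by
  induction l with
  | nil => intro C h; exact h
  | cons y l ih => intro C h; exact ih (C.and y) (SCF.andRm₁ h)

theorem foldl_and_negIntro {Γ : List (RExprF n)} (l : List (FormulaF n)) :
    ∀ (C x : FormulaF n), (x = C ∨ x ∈ l) → SCF D P (.seq Γ (.negFm x)) →
    SCF D P (.seq Γ (.negFm (l.foldl .and C))) := by
  induction l with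
  | nil =>
    rintro C x (rfl | h) hx
    · exact hx
    · simp at h
  | cons y l ih =>
    rintro C x (rfl | hx) h
    · exact foldl_and_negIntroL l (x.and y) (SCF.andRm₁ h)
    · rcases List.mem_cons.mp hx with rfl | hx
      · exact foldl_and_negIntroL l (C.and x) (SCF.andRm₂ h)
      · exact ih (C.and y) x (Or.inr hx) h

theorem foldl_or_negIntro {Γ : List (RExprF n)} (l : List (FormulaF n)) :
    ∀ (C : FormulaF n), SCF D P (.seq Γ (.negFm C)) →
    (∀ x ∈ l, SCF D P (.seq Γ (.negFm x))) →
    SCF D P (.seq Γ (.negFm (l.foldl .or C))) := by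
  induction l with
  | nil => intro C hC _; exact hC
  | cons y l ih =>
    intro C hC hl
    exact ih (C.or y) (SCF.orRm hC (hl y (by simp))) (fun x hx => hl x (by simp [hx]))

theorem foldl_and_negElim {Δ : List (RExprF n)} {T} (l : List (FormulaF n)) :
    ∀ (C : FormulaF n), (∀ x, (x = C ∨ x ∈ l) → SCF D P (.seq (Δ ++ [.negFm x]) T)) →
    SCF D P (.seq (Δ ++ [.negFm (l.foldl .and C)]) T) := by
  induction l with
  | nil => intro C h; exact h C (Or.inl rfl)
  | cons y l ih =>
    intro C h
    refine ih (C.and y) ?_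
    rintro x (rfl | hx)
    · exact SCF.andLm (h C (Or.inl rfl)) (h y (Or.inr (by simp)))
    · exact h x (Or.inr (by simp [hx]))

theorem foldl_or_negElim {T : RExprF n} (l : List (FormulaF n)) :
    ∀ (Δ : List (RExprF n)) (C : FormulaF n),
    SCF D P (.seq (Δ ++ .negFm C :: l.map .negFm) T) →
    SCF D P (.seq (Δ ++ [.negFm (l.foldl .or C)]) T) := by
  induction l with
  | nil => intro Δ C h; simpa using h
  | cons y l ih =>
    intro Δ C h
    refine ih Δ (C.or y) ?_
    -- need : Δ ++ negFm (C.or y) :: map negFm l ⇒ T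
    -- from orLm on (Δ ++ map negFm l) ++ [negFm C, negFm y] ⇒ T
    have h1 : SCF D P (.seq ((Δ ++ l.map .negFm) ++ [.negFm C, .negFm y]) T) := by
      refine perm ?_ h
      simp only [List.map_cons, List.append_assoc]
      refine List.Perm.append_left Δ ?_
      have : ((l.map RExprF.negFm) ++ [RExprF.negFm C, RExprF.negFm y]).Perm
          (([RExprF.negFm C, RExprF.negFm y] : List (RExprF n)) ++ l.map .negFm) :=
        List.perm_append_comm
      simpa using this.symm
    have h2 := SCF.orLm h1
    refine perm ?_ h2
    simp only [List.append_assoc]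
    refine List.Perm.append_left Δ ?_
    simpa using (List.perm_append_singleton (RExprF.negFm (C.or y)) (l.map RExprF.negFm))

end SCFLemmas

namespace SCFLemmas
variable {n : ℕ} {D : ConnDef n} {P : Set (RExprF n)}

theorem conjI {Γ : List (RExprF n)} {l : List (FormulaF n)} (hne : l ≠ [])
    (h : ∀ x ∈ l, SCF D P (.seq Γ (.fm x))) : SCF D P (.seq Γ (.fm (conjOfList l))) := by
  match l with
  | [] => exact absurd rfl hne
  | C :: l =>
    exact foldl_and_intro l C (h C (by simp)) (fun x hx => h x (by simp [hx]))

theorem conjE {l : List (FormulaF n)} {x} (hx : x ∈ l) :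
    SCF D P (.seq [.fm (conjOfList l)] (.fm x)) := by
  match l with
  | C :: l =>
    rcases List.mem_cons.mp hx with rfl | hx
    · exact foldl_and_elim l x x (Or.inl rfl)
    · exact foldl_and_elim l C x (Or.inr hx)

theorem disjI {Γ : List (RExprF n)} {l : List (FormulaF n)} {x} (hx : x ∈ l)
    (h : SCF D P (.seq Γ (.fm x))) : SCF D P (.seq Γ (.fm (disjOfList l))) := by
  match l with
  | C :: l =>
    rcases List.mem_cons.mp hx with rfl | hx
    · exact foldl_or_intro l x x (Or.inl rfl) h
    · exact foldl_or_intro l C x (Or.inr hx) h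

theorem disjE {Δ : List (RExprF n)} {T} {l : List (FormulaF n)} (hne : l ≠ [])
    (h : ∀ x ∈ l, SCF D P (.seq (Δ ++ [.fm x]) T)) :
    SCF D P (.seq (Δ ++ [.fm (disjOfList l)]) T) := by
  match l with
  | C :: l =>
    exact foldl_or_elim l C (h C (by simp)) (fun x hx => h x (by simp [hx]))

theorem negConjI {Γ : List (RExprF n)} {l : List (FormulaF n)} {x} (hx : x ∈ l)
    (h : SCF D P (.seq Γ (.negFm x))) : SCF D P (.seq Γ (.negFm (conjOfList l))) := by
  match l with
  | C :: l =>
    rcases List.mem_cons.mp hx with rfl | hx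
    · exact foldl_and_negIntro l x x (Or.inl rfl) h
    · exact foldl_and_negIntro l C x (Or.inr hx) h

theorem negDisjI {Γ : List (RExprF n)} {l : List (FormulaF n)} (hne : l ≠ [])
    (h : ∀ x ∈ l, SCF D P (.seq Γ (.negFm x))) :
    SCF D P (.seq Γ (.negFm (disjOfList l))) := by
  match l with
  | C :: l =>
    exact foldl_or_negIntro l C (h C (by simp)) (fun x hx => h x (by simp [hx]))

theorem negConjE {Δ : List (RExprF n)} {T} {l : List (FormulaF n)} (hne : l ≠ [])
    (h : ∀ x ∈ l, SCF D P (.seq (Δ ++ [.negFm x]) T)) :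
    SCF D P (.seq (Δ ++ [.negFm (conjOfList l)]) T) := by
  match l with
  | C :: l =>
    refine foldl_and_negElim l C ?_
    rintro x (rfl | hx)
    · exact h x (by simp)
    · exact h x (by simp [hx])

theorem negDisjE {Δ : List (RExprF n)} {T} {l : List (FormulaF n)} (hne : l ≠ [])
    (h : SCF D P (.seq (Δ ++ l.map .negFm) T)) :
    SCF D P (.seq (Δ ++ [.negFm (disjOfList l)]) T) := by
  match l with
  | C :: l =>
    exact foldl_or_negElim l Δ C (by simpa using h)

theorem multiNegConjE {T : RExprF n} (L : List (List (FormulaF n))) :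
    ∀ (Δ : List (RExprF n)), (∀ l ∈ L, l ≠ []) →
    (∀ c : List (FormulaF n), List.Forall₂ (· ∈ ·) c L →
      SCF D P (.seq (Δ ++ c.map .negFm) T)) →
    SCF D P (.seq (Δ ++ L.map (fun l => RExprF.negFm (conjOfList l))) T) := by
  induction L with
  | nil => intro Δ _ h; simpa using h [] List.Forall₂.nil
  | cons l L ih =>
    intro Δ hne h
    have goal' : SCF D P (.seq ((Δ ++ [.negFm (conjOfList l)]) ++
        L.map (fun l => RExprF.negFm (conjOfList l))) T) := by
      refine ih (Δ ++ [.negFm (conjOfList l)]) (fun l' hl' => hne l' (by simp [hl'])) ?_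
      intro c hc
      -- goal : (Δ ++ [negFm (conj l)]) ++ c.map negFm ⇒ T
      have step : SCF D P (.seq ((Δ ++ c.map .negFm) ++ [.negFm (conjOfList l)]) T) := by
        refine negConjE (hne l (by simp)) ?_
        intro x hx
        -- from h (x :: c)
        have hstep := h (x :: c) (List.Forall₂.cons hx hc)
        refine perm ?_ hstep
        -- Δ ++ negFm x :: c.map negFm ~ (Δ ++ c.map negFm) ++ [negFm x]
        simp only [List.map_cons, List.append_assoc]
        refine List.Perm.append_left Δ ?_
        exact (List.perm_append_singleton (RExprF.negFm x) (c.map RExprF.negFm)).symm.trans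
          (List.Perm.refl _) |>.symm.symm
      refine perm ?_ step
      simp only [List.append_assoc]
      refine List.Perm.append_left Δ ?_
      exact List.perm_append_comm
    simpa using goal'

end SCFLemmas

namespace SCFLemmas
variable {n : ℕ} {D : ConnDef n} {P : Set (RExprF n)}

theorem barList_eq (Δ : List (RExprF n)) : barList Δ = Δ.map bar := by
  induction Δ with
  | nil => rfl
  | cons S Δ ih => simp [barList, ih]

theorem instList_eq {σ : Fin n → FormulaF n} (Δ : List (SRExpr n)) :
    instList σ Δ = Δ.map (inst σ) := by
  induction Δ with
  | nil => rfl
  | cons S Δ ih => simp [instList, ih]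

example (U : RExprF n) (Γ : List (RExprF n)) (S : RExprF n) :
    bar (.seq (U :: Γ) S) = .imp ((barList Γ).foldl .and (bar U)) (bar S) := rfl

example (S : RExprF n) : bar (.seq [] S) = bar S := rfl

example (U : RExprF n) (Γ : List (RExprF n)) (S : RExprF n) :
    bar (.negSeq (U :: Γ) S) = .snot (bar (.seq (U :: Γ) S)) := rfl

end SCFLemmas

namespace SCFLemmas
variable {n : ℕ} {D : ConnDef n} {P : Set (RExprF n)}

/-- The four statements of the translation lemma. -/
def Bar4 (D : ConnDef n) (P : Set (RExprF n)) (S : RExprF n) : Prop :=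
  SCF D P (.seq [S] (.fm (bar S))) ∧ SCF D P (.seq [.fm (bar S)] S) ∧
  SCF D P (.seq [rnegF S] (.negFm (bar S))) ∧ SCF D P (.seq [.negFm (bar S)] (rnegF S))

theorem seq4 (Γ : List (RExprF n)) (T : RExprF n)
    (ihΓ : ∀ U ∈ Γ, Bar4 D P U) (ihT : Bar4 D P T) : Bar4 D P (.seq Γ T) := by
  obtain ⟨T1, T2, T3, T4⟩ := ihT
  match Γ with
  | [] =>
    refine ⟨?_, ?_, ?_, ?_⟩
    · -- [.seq [] T] ⇒ fm (bar T)
      have := SCF.liP (D := D) (P := P) (Γ := []) (Δ := []) (S := T) (T := .fm (bar T))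
        (by intro U hU; simp at hU) (by simpa using T1)
      exact this
    · have := SCF.riP (D := D) (P := P) (Γ := [.fm (bar T)]) (Δ := []) (S := T)
        (by simpa using T2)
      exact this
    · have := SCF.liN (D := D) (P := P) (Δ := []) (Γ := []) (S := T) (T := .negFm (bar T))
        (by intro U hU; simp at hU) (by simpa using T3)
      exact this
    · have := SCF.riN (D := D) (P := P) (Δ := [.negFm (bar T)]) (Γ := []) (S := T)
        (by simpa using T4)
      exact this
  | U :: Γ' =>
    set C : FormulaF n := (barList Γ').foldl .and (bar U) with hC
    have hCconj : C = conjOfList (barList (U :: Γ')) := rfl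
    have hbar : bar (.seq (U :: Γ') T) = .imp C (bar T) := rfl
    have hmem : ∀ V ∈ U :: Γ', bar V ∈ barList (U :: Γ') := by
      intro V hV; rw [barList_eq]; exact List.mem_map_of_mem hV
    have f1 : ∀ V ∈ U :: Γ', SCF D P (.seq [.fm C] V) := by
      intro V hV
      exact mono1 (ihΓ V hV).2.1 (hCconj ▸ conjE (hmem V hV))
    have f2 : SCF D P (.seq (U :: Γ') (.fm C)) := by
      rw [hCconj]
      refine conjI (by simp [barList]) ?_
      intro x hx
      rw [barList_eq] at hx
      obtain ⟨V, hV, rfl⟩ := List.mem_map.mp hx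
      exact mono1 (ihΓ V hV).1 (memSeq hV)
    refine ⟨?_, ?_, ?_, ?_⟩
    · -- (1) [.seq Γ T] ⇒ fm (imp C (bar T))
      rw [hbar]
      refine SCF.impR ?_
      refine SCF.riP (Γ := [.seq (U :: Γ') T]) (Δ := [.fm C]) ?_
      have step : SCF D P (.seq ([.fm C] ++ [RExprF.seq (U :: Γ') T]) (.fm (bar T))) := by
        refine SCF.liP f1 ?_
        exact mono (by intro V hV; simp at hV; subst hV; exact memSeq (by simp)) T1
      exact perm (by simp [List.Perm.swap]) step
    · -- (2) [fm (imp C barT)] ⇒ .seq Γ T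
      rw [hbar]
      refine SCF.riP (Γ := [.fm (.imp C (bar T))]) (Δ := U :: Γ') ?_
      have step : SCF D P (.seq ((U :: Γ') ++ [.fm (.imp C (bar T))]) T) := by
        refine SCF.impL ?_
        refine SCF.liP (Γ := U :: Γ') (Δ := [.fm C]) (S := .fm (bar T)) ?_ ?_
        · intro V hV; simp at hV; subst hV; exact f2
        · exact mono (by intro V hV; simp at hV; subst hV; exact memSeq (by simp)) T2
      exact perm (List.perm_append_singleton _ _) step
    · -- (3) [.negSeq Γ T] ⇒ negFm (imp C barT)
      rw [hbar]
      show SCF D P (.seq [rnegF (.seq (U :: Γ') T)] (.negFm (.imp C (bar T))))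
      refine SCF.impRm ?_
      show SCF D P (.seq [rnegF (.seq (U :: Γ') T)] (rnegF (.seq [.fm C] (.fm (bar T)))))
      refine SCF.riN (Δ := [rnegF (.seq (U :: Γ') T)]) (Γ := [.fm C]) (S := .fm (bar T)) ?_
      have step : SCF D P (.seq ([.fm C] ++ [rnegF (.seq (U :: Γ') T)]) (rnegF (.fm (bar T)))) := by
        refine SCF.liN f1 ?_
        show SCF D P (.seq ([.fm C] ++ [rnegF T]) (.negFm (bar T)))
        exact mono (by intro V hV; simp at hV; subst hV; exact memSeq (by simp)) T3
      exact perm (by simp [List.Perm.swap]) step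
    · -- (4) [negFm (imp C barT)] ⇒ rnegF (.seq Γ T)
      rw [hbar]
      refine SCF.riN (Δ := [.negFm (.imp C (bar T))]) (Γ := U :: Γ') (S := T) ?_
      have step : SCF D P (.seq ((U :: Γ') ++ [.negFm (.imp C (bar T))]) (rnegF T)) := by
        refine SCF.impLm ?_
        show SCF D P (.seq ((U :: Γ') ++ [rnegF (.seq [.fm C] (.fm (bar T)))]) (rnegF T))
        refine SCF.liN (Δ := U :: Γ') (Γ := [.fm C]) (S := .fm (bar T)) ?_ ?_
        · intro V hV; simp at hV; subst hV; exact f2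
        · show SCF D P (.seq ((U :: Γ') ++ [.negFm (bar T)]) (rnegF T))
          exact mono (by intro V hV; simp at hV; subst hV; exact memSeq (by simp)) T4
      exact perm (List.perm_append_singleton _ _) step

end SCFLemmas

namespace SCFLemmas
variable {n : ℕ} {D : ConnDef n} {P : Set (RExprF n)}

theorem bar_negSeq (Γ : List (RExprF n)) (T : RExprF n) :
    bar (.negSeq Γ T) = .snot (bar (.seq Γ T)) := by
  cases Γ <;> rfl

theorem barLem : ∀ S : RExprF n, Bar4 D P S := by
  have key : ∀ (N : ℕ) (S : RExprF n), sizeOf S ≤ N → Bar4 D P S := by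
    intro N
    induction N with
    | zero => intro S h; cases S <;> simp at h
    | succ N ih =>
      intro S hS
      match S with
      | .fm A =>
        exact ⟨SCF.rf _, SCF.rf _, SCF.rf _, SCF.rf _⟩
      | .negFm A =>
        refine ⟨SCF.snotR (SCF.rf _), ?_, SCF.snotRm (SCF.rf _), ?_⟩
        · have := SCF.snotL (D := D) (P := P) (Δ := []) (A := A) (S := .negFm A)
            (by simpa using SCF.rf (RExprF.negFm A))
          exact this
        · have := SCF.snotLm (D := D) (P := P) (Δ := []) (A := A) (S := .fm A)
            (by simpa using SCF.rf (RExprF.fm A))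
          exact this
      | .seq Γ T =>
        refine seq4 Γ T ?_ ?_
        · intro U hU
          refine ih U ?_
          have h1 := List.sizeOf_lt_of_mem hU
          simp at hS; omega
        · refine ih T ?_; simp at hS; omega
      | .negSeq Γ T =>
        have hQ : Bar4 D P (.seq Γ T) := by
          refine seq4 Γ T ?_ ?_
          · intro U hU
            refine ih U ?_
            have h1 := List.sizeOf_lt_of_mem hU
            simp at hS; omega
          · refine ih T ?_; simp at hS; omega
        obtain ⟨q1, q2, q3, q4⟩ := hQ
        rw [Bar4, bar_negSeq]
        refine ⟨SCF.snotR q3, ?_, SCF.snotRm q1, ?_⟩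
        · have := SCF.snotL (D := D) (P := P) (Δ := []) (A := bar (.seq Γ T))
            (S := .negSeq Γ T) (by exact q4)
          simpa using this
        · have := SCF.snotLm (D := D) (P := P) (Δ := []) (A := bar (.seq Γ T))
            (S := .seq Γ T) (by simpa using q2)
          simpa [rnegF] using this
  intro S
  exact key (sizeOf S) S le_rfl

end SCFLemmas

open SCFLemmas

/-- Theorem 5 (functional completeness): in the calculus extended by the
`n`-ary connective `F` defined via the schemata (I)–(IV) from the family
`S_{i k}` (`i = 1,…,t`, `k = 1,…,s_i`, with `t, s_i ≥ 1`),
`⊢ F(A₁,…,Aₙ) ⇔ˢ (S̄₁₁ ∧ … ∧ S̄₁s₁) ∨ … ∨ (S̄_t1 ∧ … ∧ S̄_tsₜ)`. -/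

theorem functional_completeness {n : ℕ} (D : ConnDef n)
    (ht : 0 < D.t) (hs : ∀ i : Fin D.t, 0 < D.s i) (A : Fin n → FormulaF n) :
    StrictEquivF D (.fm (.app A)) (.fm (defFormula D A)) := by
  set g : Fin D.t → List (FormulaF n) :=
    fun i => List.ofFn (fun k => bar (inst A (D.S i k))) with hg
  set dl : List (FormulaF n) := List.ofFn (fun i => conjOfList (g i)) with hdl
  have hdef : defFormula D A = disjOfList dl := rfl
  have hgne : ∀ i, g i ≠ [] := by
    intro i h
    have := congrArg List.length h
    simp [hg] at this
    have := hs i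
    omega
  have hdlne : dl ≠ [] := by
    intro h
    have := congrArg List.length h
    simp [hdl] at this
    omega
  refine ⟨?_, ?_, ?_, ?_⟩
  · -- F(A) ⇒ defFormula
    rw [hdef]
    have h : ∀ i : Fin D.t,
        SCF D ∅ (.seq ([] ++ List.ofFn fun k => inst A (D.S i k)) (.fm (disjOfList dl))) := by
      intro i
      have hconj : SCF D ∅ (.seq (List.ofFn fun k => inst A (D.S i k))
          (.fm (conjOfList (g i)))) := by
        refine conjI (hgne i) ?_
        intro x hx
        rw [hg] at hx
        obtain ⟨k, rfl⟩ := List.mem_ofFn.mp hx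
        exact mono1 (barLem _).1
          (memSeq (List.mem_ofFn.mpr ⟨k, rfl⟩))
      have hmemdl : conjOfList (g i) ∈ dl := by
        rw [hdl]; exact List.mem_ofFn.mpr ⟨i, rfl⟩
      simpa using disjI hmemdl hconj
    have := SCF.schemaII (Δ := []) (T := .fm (disjOfList dl)) (σ := A) h
    simpa using this
  · -- defFormula ⇒ F(A)
    rw [hdef]
    have h : ∀ x ∈ dl, SCF D ∅ (.seq ([] ++ [.fm x]) (.fm (.app A))) := by
      intro x hx
      rw [hdl] at hx
      obtain ⟨i, rfl⟩ := List.mem_ofFn.mp hx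
      have hk : ∀ k : Fin (D.s i),
          SCF D ∅ (.seq [RExprF.fm (conjOfList (g i))] (inst A (D.S i k))) := by
        intro k
        refine mono1 (barLem _).2.1 (conjE ?_)
        rw [hg]; exact List.mem_ofFn.mpr ⟨k, rfl⟩
      have := SCF.schemaI (Δ := [RExprF.fm (conjOfList (g i))]) (σ := A) i hk
      simpa using this
    have := disjE (Δ := []) hdlne h
    simpa using this
  · -- −F(A) ⇒ −defFormula
    show SCF D ∅ (.seq [.negFm (.app A)] (.negFm (defFormula D A)))
    rw [hdef]
    have h : ∀ c : (i : Fin D.t) → Fin (D.s i),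
        SCF D ∅ (.seq ([] ++ List.ofFn fun i => rnegF (inst A (D.S i (c i))))
          (.negFm (disjOfList dl))) := by
      intro c
      refine negDisjI hdlne ?_
      intro x hx
      rw [hdl] at hx
      obtain ⟨i, rfl⟩ := List.mem_ofFn.mp hx
      refine negConjI (x := bar (inst A (D.S i (c i)))) ?_ ?_
      · rw [hg]; exact List.mem_ofFn.mpr ⟨c i, rfl⟩
      · refine mono1 (barLem _).2.2.1 (memSeq ?_)
        simp only [List.nil_append]
        exact List.mem_ofFn.mpr ⟨i, rfl⟩
    have := SCF.schemaIV (Δ := []) (T := .negFm (disjOfList dl)) (σ := A) h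
    simpa using this
  · -- −defFormula ⇒ −F(A)
    show SCF D ∅ (.seq [.negFm (defFormula D A)] (.negFm (.app A)))
    rw [hdef]
    have hcs : ∀ c : List (FormulaF n), List.Forall₂ (· ∈ ·) c (List.ofFn g) →
        SCF D ∅ (.seq (([] : List (RExprF n)) ++ c.map .negFm) (.negFm (.app A))) := by
      intro c hc
      have hmem : ∀ i : Fin D.t, ∃ k : Fin (D.s i),
          RExprF.negFm (bar (inst A (D.S i k))) ∈ c.map RExprF.negFm := by
        intro i
        rw [List.forall₂_iff_get] at hc
        obtain ⟨hlen, hget⟩ := hc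
        have hi2 : i.val < (List.ofFn g).length := by simp
        have hi : i.val < c.length := by rw [hlen]; exact hi2
        have h1 := hget i.val hi hi2
        rw [List.get_ofFn] at h1
        have hcast : (Fin.cast (by simp) (⟨i.val, hi2⟩ : Fin (List.ofFn g).length)) = i := by
          ext; simp
        rw [hcast, hg] at h1
        obtain ⟨k, hk⟩ := List.mem_ofFn.mp h1
        exact ⟨k, hk ▸ List.mem_map_of_mem (c.get_mem ⟨i.val, hi⟩)⟩
      choose ch hch using hmem
      have hprem : ∀ i : Fin D.t,
          SCF D ∅ (.seq (c.map RExprF.negFm) (rnegF (inst A (D.S i (ch i))))) := by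
        intro i
        exact mono1 (barLem _).2.2.2 (memSeq (hch i))
      have := SCF.schemaIII (Δ := c.map RExprF.negFm) (σ := A) ch hprem
      simpa using this
    have h4 := multiNegConjE (D := D) (P := ∅) (T := .negFm (.app A)) (List.ofFn g) []
      (fun l hl => by
        obtain ⟨i, rfl⟩ := List.mem_ofFn.mp hl
        exact hgne i) hcs
    have h5 : SCF D ∅ (.seq (([] : List (RExprF n)) ++ dl.map .negFm) (.negFm (.app A))) := by
      have heq : (List.ofFn g).map (fun l => RExprF.negFm (conjOfList l)) = dl.map .negFm := by
        rw [hdl, List.map_ofFn, List.map_ofFn]; rfl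
      rwa [heq] at h4
    have := negDisjE (Δ := []) hdlne h5
    simpa using this
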